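/- arXiv:1404.0988 — 5 statements merged into one kernel-verified Lean document; each statement's English description precedes it below -/
import Mathlib

section
/- Let N ≥ 1, R a commutative ring, and a : Fin N → Fin N → R a family such that a s t = 0 whenever s > t (i.e. the matrix is upper triangular). Then for all indices i,j,k,l with i > j, the bracket expression (sign(j-l)+sign(i-k))·a i l·a k j + (sign(j-k)+1)·a j l·a i k + (sign(i-l)-1)·a l j·a k i equals 0. In other words, the quadratic Poisson bracket on bilinear forms restricts to the subvariety of upper-triangular matrices. -/
/-- the quadratic Poisson bracket on bilinear forms restricts to
upper-triangular matrices: if `a s t = 0` whenever `s > t`, then the bracket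
expression vanishes for `i > j`. -/
theorem bracket_upper_triangular_reduction (N : ℕ) (hN : 1 ≤ N)
    (R : Type*) [CommRing R] (a : Fin N → Fin N → R)
    (hupper : ∀ s t : Fin N, t < s → a s t = 0) :
    ∀ i j k l : Fin N, j < i →
      (Int.sign ((j : ℤ) - (l : ℤ)) + Int.sign ((i : ℤ) - (k : ℤ))) • (a i l * a k j)
        + (Int.sign ((j : ℤ) - (k : ℤ)) + 1) • (a j l * a i k)
        + (Int.sign ((i : ℤ) - (l : ℤ)) - 1) • (a l j * a k i) = 0 := by
  intro i j k l hji
  have hji' : (j : ℤ) < (i : ℤ) := by exact_mod_cast hji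
  have h1 : (Int.sign ((j : ℤ) - (l : ℤ)) + Int.sign ((i : ℤ) - (k : ℤ))) • (a i l * a k j)
      = 0 := by
    rcases lt_or_ge l i with h | h
    · rw [hupper i l h]; simp
    · rcases lt_or_ge j k with h' | h'
      · rw [hupper k j h']; simp
      · have hl : (i : ℤ) ≤ (l : ℤ) := by exact_mod_cast h
        have hk : (k : ℤ) ≤ (j : ℤ) := by exact_mod_cast h'
        have e1 : Int.sign ((j : ℤ) - (l : ℤ)) = -1 :=
          Int.sign_eq_neg_one_of_neg (by omega)
        have e2 : Int.sign ((i : ℤ) - (k : ℤ)) = 1 :=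
          Int.sign_eq_one_of_pos (by omega)
        rw [e1, e2]; simp
  have h2 : (Int.sign ((j : ℤ) - (k : ℤ)) + 1) • (a j l * a i k) = 0 := by
    rcases lt_or_ge k i with h | h
    · rw [hupper i k h]; simp
    · have hk : (i : ℤ) ≤ (k : ℤ) := by exact_mod_cast h
      have e : Int.sign ((j : ℤ) - (k : ℤ)) = -1 :=
        Int.sign_eq_neg_one_of_neg (by omega)
      rw [e]; simp
  have h3 : (Int.sign ((i : ℤ) - (l : ℤ)) - 1) • (a l j * a k i) = 0 := by
    rcases lt_or_ge j l with h | h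
    · rw [hupper l j h]; simp
    · have hl : (l : ℤ) ≤ (j : ℤ) := by exact_mod_cast h
      have e : Int.sign ((i : ℤ) - (l : ℤ)) = 1 :=
        Int.sign_eq_one_of_pos (by omega)
      rw [e]; simp
  rw [h1, h2, h3]; simp
end

section
/- Let N ≥ 1 and let s be an invertible element of a field K of characteristic zero, q = s². Define the quantum trigonometric R-matrix R(q) as the N²×N² matrix R(q) = 1 + Σ_{k,l} [(q - q⁻¹)·θ(l-k) + ((s - s⁻¹)²/2)·δ_{k,l}]·E_{k,l} ⊗ E_{l,k}, where θ(x)=1 for x>0, θ(0)=1/2, θ(x)=0 for x<0. Then R(q)·R(q⁻¹) = 1, i.e. the inverse of R(q) is obtained by the substitution q ↦ q⁻¹ (and s ↦ s⁻¹). -/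
open Matrix Kronecker

/-- The step function θ with values in a field: θ(x)=1 for x>0, θ(0)=1/2, θ(x)=0 for x<0. -/
noncomputable def thetaK (K : Type*) [Field K] (x : ℤ) : K :=
  if 0 < x then 1 else if x = 0 then 2⁻¹ else 0

/-- The quantum trigonometric R-matrix
`R(q) = 1 + Σ_{k,l} [(q-q⁻¹)θ(l-k) + ((s-s⁻¹)²/2)δ_{k,l}]·E_{k,l} ⊗ E_{l,k}`, with `q = s²`. -/
noncomputable def Rq (N : ℕ) (K : Type*) [Field K] (q s : K) :
    Matrix (Fin N × Fin N) (Fin N × Fin N) K :=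
  1 + ∑ k : Fin N, ∑ l : Fin N,
    ((q - q⁻¹) * thetaK K ((l : ℤ) - (k : ℤ))
        + (s - s⁻¹) ^ 2 / 2 * (if k = l then 1 else 0)) •
      (Matrix.single k l (1 : K) ⊗ₖ Matrix.single l k (1 : K))

/-!
Both `R(q) - 1` and `R(q⁻¹) - 1` are of the form `Σ w k l • E_{k,l} ⊗ E_{l,k}`, i.e. a diagonal
matrix times the flip `(a, b) ↦ (b, a)`, and the product of two such matrices is diagonal.
So `R(q) R(q⁻¹) = 1` reduces to scalar identities between the coefficients: off the diagonal
the two coefficients of `E_{k,l} ⊗ E_{l,k}` cancel, and `θ(x) θ(-x) = 0` kills their products;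
on the diagonal it is `c + c' + c c' = 0` for `c, c' = (±(q - q⁻¹) + (s - s⁻¹)²)/2`, which holds
because `(q - q⁻¹)² = (s - s⁻¹)² (s + s⁻¹)²` and `(s + s⁻¹)² = (s - s⁻¹)² + 4` when `q = s²`.
-/

namespace Matrix

variable {ι α : Type*} [Fintype ι] [DecidableEq ι]

def weightedSwap [Zero α] (w : ι → ι → α) : Matrix (ι × ι) (ι × ι) α :=
  of fun x y => if y = x.swap then w x.1 x.2 else 0

theorem sum_smul_single_kronecker_single [Semiring α] (w : ι → ι → α) :
    ∑ k, ∑ l, w k l • (single k l (1 : α) ⊗ₖ single l k (1 : α)) = weightedSwap w := by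
  ext ⟨a, b⟩ ⟨c, d⟩
  simp [weightedSwap, Matrix.sum_apply, single_apply, Prod.ext_iff, ite_and]
  grind

theorem weightedSwap_mul_weightedSwap [Semiring α] (w v : ι → ι → α) :
    weightedSwap w * weightedSwap v = diagonal fun x => w x.1 x.2 * v x.2 x.1 := by
  ext x y
  simp only [weightedSwap, mul_apply, diagonal_apply, of_apply]
  rw [Fintype.sum_eq_single x.swap]
  · simp [eq_comm]
  · intro j hj
    simp [hj]

theorem one_add_weightedSwap_mul_one_add_weightedSwap [Ring α] {w v : ι → ι → α}
    (h_off : ∀ a b, a ≠ b → w a b + v a b = 0 ∧ w a b * v b a = 0)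
    (h_diag : ∀ a, w a a + v a a + w a a * v a a = 0) :
    (1 + weightedSwap w) * (1 + weightedSwap v) = 1 := by
  rw [add_mul, mul_add, mul_add, one_mul, one_mul, mul_one, weightedSwap_mul_weightedSwap]
  ext ⟨a, b⟩ ⟨c, d⟩
  simp only [weightedSwap, diagonal_apply, one_apply, Prod.ext_iff, of_apply, add_apply,
    Prod.swap]
  by_cases hab : a = b
  · subst hab
    have := h_diag a
    split_ifs <;> grind
  · have := h_off a b hab
    split_ifs <;> grind

end Matrix

section RMatrix

variable {K : Type*} [Field K]

theorem thetaK_zero : thetaK K 0 = 2⁻¹ := by simp [thetaK]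

theorem thetaK_mul_thetaK_neg {x : ℤ} (hx : x ≠ 0) : thetaK K x * thetaK K (-x) = 0 := by
  rcases hx.lt_or_gt with h | h <;> simp [thetaK, h, h.not_gt, hx]

variable {N : ℕ}

noncomputable def rqCoeff (q s : K) (k l : Fin N) : K :=
  (q - q⁻¹) * thetaK K ((l : ℤ) - (k : ℤ)) + (s - s⁻¹) ^ 2 / 2 * (if k = l then 1 else 0)

theorem Rq_eq_one_add_weightedSwap (q s : K) : Rq N K q s = 1 + weightedSwap (rqCoeff q s) := by
  rw [Rq, ← sum_smul_single_kronecker_single]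
  rfl

theorem rqCoeff_add_rqCoeff_inv (q s : K) {k l : Fin N} (hkl : k ≠ l) :
    rqCoeff q s k l + rqCoeff q⁻¹ s⁻¹ k l = 0 := by
  simp only [rqCoeff, if_neg hkl, inv_inv]
  ring

theorem rqCoeff_mul_rqCoeff_inv_swap (q s : K) {k l : Fin N} (hkl : k ≠ l) :
    rqCoeff q s k l * rqCoeff q⁻¹ s⁻¹ l k = 0 := by
  have hlk : (l : ℤ) - k ≠ 0 := sub_ne_zero.mpr (by exact_mod_cast Fin.val_injective.ne hkl.symm)
  have hθ := thetaK_mul_thetaK_neg (K := K) hlk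
  simp only [rqCoeff, if_neg hkl, if_neg hkl.symm, inv_inv, neg_sub] at hθ ⊢
  linear_combination (q - q⁻¹) * (q⁻¹ - q) * hθ

theorem rqCoeff_self (q s : K) (k : Fin N) :
    rqCoeff q s k k = (q - q⁻¹ + (s - s⁻¹) ^ 2) / 2 := by
  rw [rqCoeff, if_pos rfl, sub_self, thetaK_zero]
  ring

theorem rqCoeff_self_add_rqCoeff_inv_self [NeZero (2 : K)] {s : K} (hs : s ≠ 0) (k : Fin N) :
    rqCoeff (s ^ 2) s k k + rqCoeff (s ^ 2)⁻¹ s⁻¹ k k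
      + rqCoeff (s ^ 2) s k k * rqCoeff (s ^ 2)⁻¹ s⁻¹ k k = 0 := by
  simp only [rqCoeff_self, inv_inv]
  field_simp
  ring

end RMatrix

theorem Rq_mul_Rq_inv_general (N : ℕ) (K : Type*) [Field K] [CharZero K]
    (s : K) (hs : s ≠ 0) (q : K) (hq : q = s ^ 2) :
    Rq N K q s * Rq N K q⁻¹ s⁻¹ = 1 := by
  subst hq
  rw [Rq_eq_one_add_weightedSwap, Rq_eq_one_add_weightedSwap]
  exact one_add_weightedSwap_mul_one_add_weightedSwap
    (fun _ _ hkl => ⟨rqCoeff_add_rqCoeff_inv _ _ hkl, rqCoeff_mul_rqCoeff_inv_swap _ _ hkl⟩)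
    (rqCoeff_self_add_rqCoeff_inv_self hs)

/-- `R(q)·R(q⁻¹) = 1`, the inverse of the quantum trigonometric R-matrix
being obtained by the substitution `q ↦ q⁻¹`, `s ↦ s⁻¹`. -/
theorem Rq_mul_Rq_inv (N : ℕ) (hN : 1 ≤ N) (K : Type*) [Field K] [CharZero K]
    (s : K) (hs : s ≠ 0) (q : K) (hq : q = s ^ 2) :
    Rq N K q s * Rq N K q⁻¹ s⁻¹ = 1 :=
  Rq_mul_Rq_inv_general N K s hs q hq
end

section
/- With R(q) the quantum trigonometric R-matrix (R(q) = 1 + Σ_{k,l}[(q-q⁻¹)θ(l-k) + ((s-s⁻¹)²/2)δ_{k,l}]E_{k,l}⊗E_{l,k}, q = s², over a characteristic-zero field), the following transposed Yang–Baxter relation holds in Mat_N⊗Mat_N⊗Mat_N: R₂₃(q)·R₁₃^{t₁}(q⁻¹)·R₁₂^{t₁}(q⁻¹) = R₁₂^{t₁}(q⁻¹)·R₁₃^{t₁}(q⁻¹)·R₂₃(q), where t₁ denotes partial transposition in the first tensor factor. -/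
open Matrix Kronecker

/-- Embedding of an N²×N² matrix into tensor factors 1 and 2 of Mat_N⊗Mat_N⊗Mat_N. -/
def emb12 {N : ℕ} {K : Type*} [Field K]
    (M : Matrix (Fin N × Fin N) (Fin N × Fin N) K) :
    Matrix (Fin N × Fin N × Fin N) (Fin N × Fin N × Fin N) K :=
  Matrix.of fun p q => M (p.1, p.2.1) (q.1, q.2.1) * (if p.2.2 = q.2.2 then 1 else 0)

/-- Embedding into tensor factors 2 and 3. -/
def emb23 {N : ℕ} {K : Type*} [Field K]
    (M : Matrix (Fin N × Fin N) (Fin N × Fin N) K) :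
    Matrix (Fin N × Fin N × Fin N) (Fin N × Fin N × Fin N) K :=
  Matrix.of fun p q => (if p.1 = q.1 then 1 else 0) * M (p.2.1, p.2.2) (q.2.1, q.2.2)

/-- Embedding into tensor factors 1 and 3. -/
def emb13 {N : ℕ} {K : Type*} [Field K]
    (M : Matrix (Fin N × Fin N) (Fin N × Fin N) K) :
    Matrix (Fin N × Fin N × Fin N) (Fin N × Fin N × Fin N) K :=
  Matrix.of fun p q => M (p.1, p.2.2) (q.1, q.2.2) * (if p.2.1 = q.2.1 then 1 else 0)

/-- Partial transpose in the first tensor factor of an N³×N³ matrix. -/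
def trpt1 {N : ℕ} {K : Type*} [Field K]
    (M : Matrix (Fin N × Fin N × Fin N) (Fin N × Fin N × Fin N) K) :
    Matrix (Fin N × Fin N × Fin N) (Fin N × Fin N × Fin N) K :=
  Matrix.of fun p q => M (q.1, p.2) (p.1, q.2)

/-- Partial transpose in the second tensor factor of an N³×N³ matrix. -/
def trpt2 {N : ℕ} {K : Type*} [Field K]
    (M : Matrix (Fin N × Fin N × Fin N) (Fin N × Fin N × Fin N) K) :
    Matrix (Fin N × Fin N × Fin N) (Fin N × Fin N × Fin N) K :=
  Matrix.of fun p q => M (p.1, q.2.1, p.2.2) (q.1, p.2.1, q.2.2)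


/-!
For `q = s²` the matrix `Rq N K q s` is Jimbo's R-matrix
`R = q Σ_a E_aa ⊗ E_aa + Σ_{a ≠ b} E_aa ⊗ E_bb + (q - q⁻¹) Σ_{a < b} E_ab ⊗ E_ba`,
and since it only mixes `e_a ⊗ e_b` with `e_b ⊗ e_a`, one checks directly that `R(q⁻¹) = R(q)⁻¹`.
The partial transpose `t₁` reverses the order of a product of an operator on factors `1, 2` and one
on factors `1, 3`, and commutes with multiplication by `R₂₃`. The claim thus becomes
`R₂₃ R₁₂⁻¹ R₁₃⁻¹ = R₁₃⁻¹ R₁₂⁻¹ R₂₃`, which is a rearrangement of the Yang–Baxter equation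
`R₁₂ R₁₃ R₂₃ = R₂₃ R₁₃ R₁₂`. The latter is checked entrywise: every row of `R₁₂`, `R₁₃`, `R₂₃` has
at most two nonzero entries, and the remaining identities depend only on the relative order of the
three indices of the row.
-/

theorem Matrix.mul_apply_of_row_eq {l m o α : Type*} [Fintype m] [DecidableEq m]
    [NonUnitalNonAssocSemiring α] {X : Matrix l m α} {i : l} {u v : m} {x y : α}
    (hX : ∀ k, X i k = (if k = u then x else 0) + (if k = v then y else 0))
    (Y : Matrix m o α) (j : o) :
    (X * Y) i j = x * Y u j + y * Y v j := by
  simp [mul_apply, hX, add_mul, ite_mul, Finset.sum_add_distrib]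

theorem mul_inv_mul_inv_eq_of_mul_mul_eq {M : Type*} [Monoid M] {a a' b b' c : M}
    (ha : a' * a = 1) (ha' : a * a' = 1) (hb : b' * b = 1) (hb' : b * b' = 1)
    (h : a * b * c = c * b * a) : c * a' * b' = b' * a' * c :=
  calc c * a' * b' = b' * (a' * a) * b * c * a' * b' := by rw [ha, mul_one, hb, one_mul]
    _ = b' * a' * (a * b * c) * a' * b' := by simp only [mul_assoc]
    _ = b' * a' * c * b * (a * a') * b' := by rw [h]; simp only [mul_assoc]
    _ = b' * a' * c := by rw [ha', mul_one, mul_assoc, hb', mul_one]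

section Embeddings

variable {N : ℕ} {K : Type*} [Field K]

theorem emb12_mul (X Y : Matrix (Fin N × Fin N) (Fin N × Fin N) K) :
    emb12 (X * Y) = emb12 X * emb12 Y := by
  ext ⟨p1, p2, p3⟩ ⟨q1, q2, q3⟩
  simp [emb12, mul_apply, Fintype.sum_prod_type, ite_mul, mul_ite]

theorem emb13_mul (X Y : Matrix (Fin N × Fin N) (Fin N × Fin N) K) :
    emb13 (X * Y) = emb13 X * emb13 Y := by
  ext ⟨p1, p2, p3⟩ ⟨q1, q2, q3⟩
  simp [emb13, mul_apply, Fintype.sum_prod_type, ite_mul, mul_ite]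

theorem emb12_one : emb12 (1 : Matrix (Fin N × Fin N) (Fin N × Fin N) K) = 1 := by
  ext ⟨p1, p2, p3⟩ ⟨q1, q2, q3⟩
  simp [emb12, one_apply]
  grind

theorem emb13_one : emb13 (1 : Matrix (Fin N × Fin N) (Fin N × Fin N) K) = 1 := by
  ext ⟨p1, p2, p3⟩ ⟨q1, q2, q3⟩
  simp [emb13, one_apply]
  grind

theorem trpt1_emb23_mul (X : Matrix (Fin N × Fin N) (Fin N × Fin N) K)
    (M : Matrix (Fin N × Fin N × Fin N) (Fin N × Fin N × Fin N) K) :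
    trpt1 (emb23 X * M) = emb23 X * trpt1 M := by
  ext ⟨p1, p2, p3⟩ ⟨q1, q2, q3⟩
  simp [trpt1, emb23, mul_apply, Fintype.sum_prod_type]

theorem trpt1_mul_emb23 (X : Matrix (Fin N × Fin N) (Fin N × Fin N) K)
    (M : Matrix (Fin N × Fin N × Fin N) (Fin N × Fin N × Fin N) K) :
    trpt1 (M * emb23 X) = trpt1 M * emb23 X := by
  ext ⟨p1, p2, p3⟩ ⟨q1, q2, q3⟩
  simp [trpt1, emb23, mul_apply, Fintype.sum_prod_type]

theorem trpt1_emb12_mul_emb13 (X Y : Matrix (Fin N × Fin N) (Fin N × Fin N) K) :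
    trpt1 (emb12 X * emb13 Y) = trpt1 (emb13 Y) * trpt1 (emb12 X) := by
  ext ⟨p1, p2, p3⟩ ⟨q1, q2, q3⟩
  simp [trpt1, emb12, emb13, mul_apply, Fintype.sum_prod_type, mul_comm]

theorem trpt1_emb13_mul_emb12 (X Y : Matrix (Fin N × Fin N) (Fin N × Fin N) K) :
    trpt1 (emb13 X * emb12 Y) = trpt1 (emb12 Y) * trpt1 (emb13 X) := by
  ext ⟨p1, p2, p3⟩ ⟨q1, q2, q3⟩
  simp [trpt1, emb12, emb13, mul_apply, Fintype.sum_prod_type, mul_comm]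

end Embeddings

section Jimbo

variable {N : ℕ} {K : Type*} [Field K]

def jimboCoeff (q : K) (a b : Fin N) : K :=
  if a < b then q - q⁻¹ else if a = b then q - 1 else 0

theorem jimboCoeff_of_lt (q : K) {a b : Fin N} (h : a < b) : jimboCoeff q a b = q - q⁻¹ := by
  simp [jimboCoeff, h]

theorem jimboCoeff_self (q : K) (a : Fin N) : jimboCoeff q a a = q - 1 := by
  simp [jimboCoeff]

theorem jimboCoeff_of_gt (q : K) {a b : Fin N} (h : b < a) : jimboCoeff q a b = 0 := by
  simp [jimboCoeff, h.not_gt, h.ne']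

variable (N) in
def jimbo (q : K) : Matrix (Fin N × Fin N) (Fin N × Fin N) K :=
  of fun x y => (if y = x then 1 else 0) + (if y = x.swap then jimboCoeff q x.1 x.2 else 0)

theorem Rq_coeff_eq_jimboCoeff [NeZero (2 : K)] {q s : K} (hs : s ≠ 0) (hq : q = s ^ 2)
    (a b : Fin N) :
    (q - q⁻¹) * thetaK K ((b : ℤ) - a) + (s - s⁻¹) ^ 2 / 2 * (if a = b then 1 else 0) =
      jimboCoeff q a b := by
  rcases lt_trichotomy a b with h | rfl | h
  · simp [jimboCoeff, thetaK, h, h.ne]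
  · simp only [jimboCoeff_self, thetaK, sub_self, lt_self_iff_false, if_true, if_false]
    subst hq
    field_simp
    ring
  · have h' : b - (a : ℤ) ≠ 0 := by have := Fin.lt_def.mp h; omega
    simp [jimboCoeff, thetaK, h.not_gt, h', h.ne']

theorem Rq_eq_jimbo [NeZero (2 : K)] {q s : K} (hs : s ≠ 0) (hq : q = s ^ 2) :
    Rq N K q s = jimbo N q := by
  ext ⟨a, b⟩ ⟨c, d⟩
  simp_rw [Rq, Rq_coeff_eq_jimboCoeff hs hq]
  simp [jimbo, Matrix.sum_apply, Matrix.single_apply, one_apply, ite_and, Prod.ext_iff, eq_comm]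
  split_ifs <;> simp_all

theorem jimbo_inv_mul_jimbo {q : K} (hq : q ≠ 0) : jimbo N q⁻¹ * jimbo N q = 1 := by
  ext ⟨a, b⟩ y
  rw [mul_apply_of_row_eq (fun _ => rfl)]
  rcases lt_trichotomy a b with h | rfl | h
  · simp [jimbo, jimboCoeff, one_apply, h, h.not_gt]
    split_ifs <;> simp_all
  · by_cases hy : y = (a, a)
    · subst hy
      simp [jimbo, jimboCoeff]
      field_simp
      ring
    · simp [jimbo, one_apply, hy, Ne.symm hy]
  · simp [jimbo, jimboCoeff, one_apply, h, h.ne', h.not_gt]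
    split_ifs <;> simp_all

theorem emb12_jimbo_apply (q : K) (i j k : Fin N) (m : Fin N × Fin N × Fin N) :
    emb12 (jimbo N q) (i, j, k) m =
      (if m = (i, j, k) then 1 else 0) + (if m = (j, i, k) then jimboCoeff q i j else 0) := by
  obtain ⟨m1, m2, m3⟩ := m
  simp only [emb12, jimbo, of_apply, Prod.swap_prod_mk, Prod.mk.injEq]
  grind

theorem emb13_jimbo_apply (q : K) (i j k : Fin N) (m : Fin N × Fin N × Fin N) :
    emb13 (jimbo N q) (i, j, k) m =
      (if m = (i, j, k) then 1 else 0) + (if m = (k, j, i) then jimboCoeff q i k else 0) := by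
  obtain ⟨m1, m2, m3⟩ := m
  simp only [emb13, jimbo, of_apply, Prod.swap_prod_mk, Prod.mk.injEq]
  grind

theorem emb23_jimbo_apply (q : K) (i j k : Fin N) (m : Fin N × Fin N × Fin N) :
    emb23 (jimbo N q) (i, j, k) m =
      (if m = (i, j, k) then 1 else 0) + (if m = (i, k, j) then jimboCoeff q j k else 0) := by
  obtain ⟨m1, m2, m3⟩ := m
  simp only [emb23, jimbo, of_apply, Prod.swap_prod_mk, Prod.mk.injEq]
  grind

set_option maxHeartbeats 1000000 in
theorem jimbo_yang_baxter {q : K} (hq : q ≠ 0) :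
    emb12 (jimbo N q) * emb13 (jimbo N q) * emb23 (jimbo N q) =
      emb23 (jimbo N q) * emb13 (jimbo N q) * emb12 (jimbo N q) := by
  ext ⟨i, j, k⟩ c
  simp only [mul_assoc, mul_apply_of_row_eq (emb12_jimbo_apply q _ _ _),
    mul_apply_of_row_eq (emb13_jimbo_apply q _ _ _), mul_apply_of_row_eq (emb23_jimbo_apply q _ _ _),
    emb12_jimbo_apply, emb23_jimbo_apply, one_mul]
  rcases lt_trichotomy i j with hij | hij | hij <;> rcases lt_trichotomy j k with hjk | hjk | hjk <;>
    rcases lt_trichotomy i k with hik | hik | hik <;> try order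
  all_goals
    subst_vars
    simp only [jimboCoeff_of_lt, jimboCoeff_of_gt, jimboCoeff_self, *]
  all_goals split_ifs <;> subst_vars <;> first | ring1 | (field_simp; ring1)

end Jimbo

theorem transposed_yang_baxter_general (N : ℕ)
    (K : Type*) [Field K] [CharZero K] (s : K) (hs : s ≠ 0) (q : K) (hq : q = s ^ 2) :
    emb23 (Rq N K q s) * trpt1 (emb13 (Rq N K q⁻¹ s⁻¹)) * trpt1 (emb12 (Rq N K q⁻¹ s⁻¹)) =
      trpt1 (emb12 (Rq N K q⁻¹ s⁻¹)) * trpt1 (emb13 (Rq N K q⁻¹ s⁻¹)) * emb23 (Rq N K q s) := by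
  have hq0 : q ≠ 0 := hq ▸ pow_ne_zero 2 hs
  rw [Rq_eq_jimbo hs hq, Rq_eq_jimbo (inv_ne_zero hs) (by rw [hq, inv_pow])]
  have inv12 : emb12 (jimbo N q⁻¹) * emb12 (jimbo N q) = 1 := by
    rw [← emb12_mul, jimbo_inv_mul_jimbo hq0, emb12_one]
  have inv13 : emb13 (jimbo N q⁻¹) * emb13 (jimbo N q) = 1 := by
    rw [← emb13_mul, jimbo_inv_mul_jimbo hq0, emb13_one]
  have key := mul_inv_mul_inv_eq_of_mul_mul_eq inv12 (mul_eq_one_comm.mp inv12) inv13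
    (mul_eq_one_comm.mp inv13) (jimbo_yang_baxter hq0)
  rw [mul_assoc, ← trpt1_emb12_mul_emb13, ← trpt1_emb23_mul, ← mul_assoc, key,
    trpt1_mul_emb23, trpt1_emb13_mul_emb12]

/-- the transposed Yang–Baxter relation
`R₂₃(q)·R₁₃^{t₁}(q⁻¹)·R₁₂^{t₁}(q⁻¹) = R₁₂^{t₁}(q⁻¹)·R₁₃^{t₁}(q⁻¹)·R₂₃(q)`. -/
theorem transposed_yang_baxter (N : ℕ) (hN : 1 ≤ N)
    (K : Type*) [Field K] [CharZero K] (s : K) (hs : s ≠ 0) (q : K) (hq : q = s ^ 2) :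
    emb23 (Rq N K q s) * trpt1 (emb13 (Rq N K q⁻¹ s⁻¹)) * trpt1 (emb12 (Rq N K q⁻¹ s⁻¹)) =
      trpt1 (emb12 (Rq N K q⁻¹ s⁻¹)) * trpt1 (emb13 (Rq N K q⁻¹ s⁻¹)) * emb23 (Rq N K q s) :=
  transposed_yang_baxter_general N K s hs q hq
end

section
/- Let K be a field, q, λ, μ ∈ K with q, λ, μ invertible and q⁻¹λ - qμ ≠ 0 and qλ - q⁻¹μ ≠ 0. Define the affine quantum R-matrix R(λ,μ;q) as the N²×N² matrix R(λ,μ;q) = (λ-μ)/(q⁻¹λ-qμ)·Σ_{i≠j} E_{i,i}⊗E_{j,j} + Σ_i E_{i,i}⊗E_{i,i} + (q⁻¹-q)λ/(q⁻¹λ-qμ)·Σ_{i<j} E_{i,j}⊗E_{j,i} + (q⁻¹-q)μ/(q⁻¹λ-qμ)·Σ_{i>j} E_{i,j}⊗E_{j,i}. Then R(λ,μ;q)·R(λ,μ;q⁻¹) = 1, i.e. the inverse of R(λ,μ;q) is R(λ,μ;q⁻¹). -/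
open Matrix

/-- The affine quantum trigonometric R-matrix `R(λ,μ;q)`:
`R(λ,μ;q) = (λ-μ)/(q⁻¹λ-qμ)·Σ_{i≠j} E_{i,i}⊗E_{j,j} + Σ_i E_{i,i}⊗E_{i,i}
  + (q⁻¹-q)λ/(q⁻¹λ-qμ)·Σ_{i<j} E_{i,j}⊗E_{j,i} + (q⁻¹-q)μ/(q⁻¹λ-qμ)·Σ_{i>j} E_{i,j}⊗E_{j,i}`. -/
noncomputable def Raff (N : ℕ) (K : Type*) [Field K] (lam mu q : K) :
    Matrix (Fin N × Fin N) (Fin N × Fin N) K :=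
  Matrix.of fun p r =>
    (if p.1 = r.1 ∧ p.2 = r.2 ∧ p.1 ≠ p.2 then (lam - mu) / (q⁻¹ * lam - q * mu) else 0)
    + (if p.1 = r.1 ∧ p.2 = r.2 ∧ p.1 = p.2 then 1 else 0)
    + (if p.1 = r.2 ∧ p.2 = r.1 ∧ p.1 < p.2 then
        ((q⁻¹ - q) * lam) / (q⁻¹ * lam - q * mu) else 0)
    + (if p.1 = r.2 ∧ p.2 = r.1 ∧ p.2 < p.1 then
        ((q⁻¹ - q) * mu) / (q⁻¹ * lam - q * mu) else 0)

/-!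
`R(λ,μ;q)` only couples the basis vector `(i, j)` with itself and with `(j, i)`, so the product
splits into `1 × 1` blocks (for `i = j`), which are trivially `1`, and `2 × 2` blocks. On a
`2 × 2` block the off-diagonal entries of the product cancel termwise, while the diagonal ones
equal `((λ - μ)² - (q - q⁻¹)² λ μ) / ((q⁻¹λ - qμ)(qλ - q⁻¹μ)) = 1`.
-/

theorem Matrix.mul_apply_eq_sum_pair_swap {α K : Type*} [Fintype α] [DecidableEq α]
    [NonUnitalNonAssocSemiring K] {A : Matrix (α × α) (α × α) K}
    (B : Matrix (α × α) (α × α) K)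
    (hA : ∀ p r, r ≠ p → r ≠ p.swap → A p r = 0) (p s : α × α) :
    (A * B) p s = ∑ r ∈ {p, p.swap}, A p r * B r s := by
  rw [mul_apply, ← Finset.sum_subset (Finset.subset_univ _)]
  intro r _ hr
  simp only [Finset.mem_insert, Finset.mem_singleton, not_or] at hr
  rw [hA p r hr.1 hr.2, zero_mul]

section Raff

variable {N : ℕ} {K : Type*} [Field K] (lam mu q : K)

theorem Raff_apply_of_ne (p r : Fin N × Fin N) (h₁ : r ≠ p) (h₂ : r ≠ p.swap) :
    Raff N K lam mu q p r = 0 := by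
  obtain ⟨i, j⟩ := p
  obtain ⟨k, l⟩ := r
  simp only [ne_eq, Prod.mk.injEq, Prod.swap_prod_mk] at h₁ h₂
  simp only [Raff, of_apply]
  grind

theorem Raff_apply_diag (i : Fin N) (s : Fin N × Fin N) :
    Raff N K lam mu q (i, i) s = (1 : Matrix (Fin N × Fin N) (Fin N × Fin N) K) (i, i) s := by
  by_cases hs : s = (i, i)
  · subst hs
    simp [Raff]
  · rw [Raff_apply_of_ne _ _ _ _ _ hs (by simpa using hs), one_apply_ne (Ne.symm hs)]

theorem Raff_apply_self_of_ne {i j : Fin N} (hij : i ≠ j) :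
    Raff N K lam mu q (i, j) (i, j) = (lam - mu) / (q⁻¹ * lam - q * mu) := by
  simp [Raff, hij]

theorem Raff_apply_swap_of_ne {i j : Fin N} (hij : i ≠ j) :
    Raff N K lam mu q (i, j) (j, i) =
      (q⁻¹ - q) * (if i < j then lam else mu) / (q⁻¹ * lam - q * mu) := by
  rcases hij.lt_or_gt with h | h <;> simp [Raff, hij, h, h.not_gt, hij.symm]

end Raff

theorem Raff_block_diag_eq_one {K : Type*} [Field K] {lam mu q : K} (hq : q ≠ 0)
    (hden : q⁻¹ * lam - q * mu ≠ 0) (hden' : q * lam - q⁻¹ * mu ≠ 0) {x y : K}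
    (hxy : x * y = lam * mu) :
    (lam - mu) / (q⁻¹ * lam - q * mu) * ((lam - mu) / (q * lam - q⁻¹ * mu)) +
      (q⁻¹ - q) * x / (q⁻¹ * lam - q * mu) * ((q - q⁻¹) * y / (q * lam - q⁻¹ * mu)) = 1 := by
  rw [div_mul_div_comm, div_mul_div_comm, ← add_div, div_eq_one_iff_eq (mul_ne_zero hden hden'),
    show (q⁻¹ - q) * x * ((q - q⁻¹) * y) = -((q - q⁻¹) ^ 2 * (x * y)) by ring, hxy]
  field_simp
  ring

theorem Raff_mul_Raff_qinv_general (N : ℕ) (K : Type*) [Field K]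
    (lam mu q : K) (hq : q ≠ 0)
    (hden : q⁻¹ * lam - q * mu ≠ 0) (hden' : q * lam - q⁻¹ * mu ≠ 0) :
    Raff N K lam mu q * Raff N K lam mu q⁻¹ = 1 := by
  ext ⟨i, j⟩ s
  rw [mul_apply_eq_sum_pair_swap _ (Raff_apply_of_ne lam mu q)]
  obtain rfl | hij := eq_or_ne i j
  · simp [Raff_apply_diag]
  have hswap : ((i, j) : Fin N × Fin N) ≠ (j, i) := by simp [hij]
  rw [Prod.swap_prod_mk, Finset.sum_pair hswap, Raff_apply_self_of_ne _ _ _ hij,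
    Raff_apply_swap_of_ne _ _ _ hij]
  by_cases hs : s = (i, j)
  · subst hs
    rw [Raff_apply_self_of_ne lam mu q⁻¹ hij, Raff_apply_swap_of_ne _ _ _ (Ne.symm hij),
      one_apply_eq, inv_inv]
    refine Raff_block_diag_eq_one hq hden hden' ?_
    rcases hij.lt_or_gt with h | h <;> simp [h, h.not_gt, mul_comm]
  by_cases hs' : s = (j, i)
  · subst hs'
    rw [Raff_apply_swap_of_ne lam mu q⁻¹ hij, Raff_apply_self_of_ne _ _ _ (Ne.symm hij),
      one_apply_ne hswap, inv_inv]
    ring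
  rw [Raff_apply_of_ne _ _ _ _ _ hs (by simpa using hs'),
    Raff_apply_of_ne _ _ _ _ _ hs' (by simpa using hs), one_apply_ne (Ne.symm hs)]
  ring

/-- `R(λ,μ;q)·R(λ,μ;q⁻¹) = 1`. -/
theorem Raff_mul_Raff_qinv (N : ℕ) (hN : 1 ≤ N) (K : Type*) [Field K]
    (lam mu q : K) (hlam : lam ≠ 0) (hmu : mu ≠ 0) (hq : q ≠ 0)
    (hden : q⁻¹ * lam - q * mu ≠ 0) (hden' : q * lam - q⁻¹ * mu ≠ 0) :
    Raff N K lam mu q * Raff N K lam mu q⁻¹ = 1 :=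
  Raff_mul_Raff_qinv_general N K lam mu q hq hden hden'
end

section
/- Let K be a field of characteristic zero, s ∈ K invertible, q = s², and R(q) the quantum trigonometric R-matrix R(q) = 1 + Σ_{k,l}[(q-q⁻¹)θ(l-k) + ((s-s⁻¹)²/2)δ_{k,l}]E_{k,l}⊗E_{l,k}. Then R(q)·R^{t₁}(q⁻¹)·R(q⁻¹) = R^{t₁}(q⁻¹), i.e. R(q) conjugation fixes the partial transpose R^{t₁}(q⁻¹); equivalently R(q) commutes with R^{t₁}(q⁻¹). -/
open Matrix Kronecker

/-- Partial transpose in the first tensor factor. -/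
def pt1 {N : ℕ} {K : Type*} [Field K]
    (M : Matrix (Fin N × Fin N) (Fin N × Fin N) K) :
    Matrix (Fin N × Fin N) (Fin N × Fin N) K :=
  Matrix.of fun p q => M (q.1, p.2) (p.1, q.2)

/-!
Write `R(q) = 1 + Σ c(k,l) E_{k,l} ⊗ E_{l,k}`. Its partial transpose `R^{t₁}(q')` is `1` plus
terms `E_{l,k} ⊗ E_{l,k}`, which map into and vanish off the span of the vectors `e_k ⊗ e_k`.
On that span `R(q)` acts (from either side) as the scalar `1 + c(k,k)`, which does not depend
on `k`; hence `R(q)` commutes with `R^{t₁}(q')` for all parameters. The first identity then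
follows from the unitarity `R(q) R(q⁻¹) = 1`, which holds because `1 + c(k,k) = q` when
`q = s²`, while off the diagonal `c(k,l) + c'(k,l) = 0` and `c(k,l) c'(l,k) = 0` (`θ(x) θ(-x) = 0`).
-/

section

variable {K : Type*} [Field K]

variable {N : ℕ}

noncomputable def Rq.coeff (q s : K) (k l : Fin N) : K :=
  (q - q⁻¹) * thetaK K ((l : ℤ) - (k : ℤ)) + (s - s⁻¹) ^ 2 / 2 * (if k = l then 1 else 0)

theorem Rq.coeff_self (q s : K) (k : Fin N) :
    Rq.coeff q s k k = (q - q⁻¹) / 2 + (s - s⁻¹) ^ 2 / 2 := by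
  simp [Rq.coeff, thetaK, div_eq_mul_inv]

theorem Rq.coeff_self_of_sq [NeZero (2 : K)] {s : K} (hs : s ≠ 0) (k : Fin N) :
    Rq.coeff (s ^ 2) s k k = s ^ 2 - 1 := by
  rw [Rq.coeff_self]
  field_simp
  ring

theorem Rq.coeff_add_coeff_inv (q s : K) {k l : Fin N} (h : k ≠ l) :
    Rq.coeff q s k l + Rq.coeff q⁻¹ s⁻¹ k l = 0 := by
  simp only [Rq.coeff, if_neg h, inv_inv]
  ring

theorem Rq.coeff_mul_coeff_swap (q s q' s' : K) {k l : Fin N} (h : k ≠ l) :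
    Rq.coeff q s k l * Rq.coeff q' s' l k = 0 := by
  have hθ : thetaK K ((l : ℤ) - k) * thetaK K ((k : ℤ) - l) = 0 := by
    have hlk : (l : ℤ) ≠ k := by exact_mod_cast Fin.val_ne_of_ne h.symm
    simpa only [neg_sub] using thetaK_mul_thetaK_neg (K := K) (sub_ne_zero.2 hlk)
  simp only [Rq.coeff, if_neg h, if_neg h.symm]
  linear_combination (q - q⁻¹) * (q' - q'⁻¹) * hθ

theorem Rq_apply (q s : K) (i j m n : Fin N) :
    Rq N K q s (i, j) (m, n) =
      (if i = m ∧ j = n then 1 else 0) + (if j = m ∧ n = i then Rq.coeff q s i m else 0) := by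
  simp only [Rq, Matrix.add_apply, Matrix.sum_apply, Matrix.smul_apply, kroneckerMap_apply,
    single, of_apply, smul_eq_mul, one_apply, Prod.mk.injEq, Rq.coeff]
  by_cases hjm : j = m
  · subst hjm
    by_cases hni : n = i
    · subst hni
      simp [ite_and]
    · simp [hni, ite_and]
  · simp [hjm, ite_and]

theorem pt1_apply (M : Matrix (Fin N × Fin N) (Fin N × Fin N) K) (i j m n : Fin N) :
    pt1 M (i, j) (m, n) = M (m, j) (i, n) := rfl

theorem Rq_mul_apply (q s : K) (M : Matrix (Fin N × Fin N) (Fin N × Fin N) K) (i j m n : Fin N) :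
    (Rq N K q s * M) (i, j) (m, n) = M (i, j) (m, n) + Rq.coeff q s i j * M (j, i) (m, n) := by
  rw [mul_apply, Fintype.sum_prod_type]
  simp only [Rq_apply, add_mul, ite_mul, one_mul, zero_mul, Finset.sum_add_distrib]
  congr 1 <;> simp [ite_and]

theorem mul_Rq_apply (q s : K) (M : Matrix (Fin N × Fin N) (Fin N × Fin N) K) (i j m n : Fin N) :
    (M * Rq N K q s) (i, j) (m, n) = M (i, j) (m, n) + Rq.coeff q s n m * M (i, j) (n, m) := by
  rw [mul_apply, Fintype.sum_prod_type]
  simp only [Rq_apply, mul_add, mul_ite, mul_one, mul_zero, Finset.sum_add_distrib]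
  congr 1 <;> simp [ite_and, mul_comm]

theorem Rq_commute_pt1_Rq (q s q' s' : K) : Commute (Rq N K q s) (pt1 (Rq N K q' s')) := by
  ext ⟨i, j⟩ ⟨m, n⟩
  rw [Rq_mul_apply, mul_Rq_apply]
  simp only [pt1_apply, Rq_apply]
  congr 1
  split_ifs <;> grind [Rq.coeff_self]

theorem Rq_mul_Rq_inv_s17 [NeZero (2 : K)] {s : K} (hs : s ≠ 0) :
    Rq N K (s ^ 2) s * Rq N K (s ^ 2)⁻¹ s⁻¹ = 1 := by
  ext ⟨i, j⟩ ⟨m, n⟩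
  rw [Rq_mul_apply]
  have hdiag (k : Fin N) : Rq.coeff (s ^ 2) s k k = s ^ 2 - 1 := Rq.coeff_self_of_sq hs k
  have hdiag' (k : Fin N) : Rq.coeff (s ^ 2)⁻¹ s⁻¹ k k = (s ^ 2)⁻¹ - 1 := by
    rw [← inv_pow]; exact Rq.coeff_self_of_sq (inv_ne_zero hs) k
  have hs2 : s ^ 2 * (s ^ 2)⁻¹ = 1 := mul_inv_cancel₀ (pow_ne_zero 2 hs)
  simp only [Rq_apply, one_apply, Prod.mk.injEq]
  split_ifs <;> grind [Rq.coeff_add_coeff_inv, Rq.coeff_mul_coeff_swap]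

end

theorem Rq_fixes_pt1_Rq_inv_general (N : ℕ)
    (K : Type*) [Field K] [CharZero K] (s : K) (hs : s ≠ 0) (q : K) (hq : q = s ^ 2) :
    Rq N K q s * pt1 (Rq N K q⁻¹ s⁻¹) * Rq N K q⁻¹ s⁻¹ = pt1 (Rq N K q⁻¹ s⁻¹) ∧
      Rq N K q s * pt1 (Rq N K q⁻¹ s⁻¹) = pt1 (Rq N K q⁻¹ s⁻¹) * Rq N K q s := by
  subst hq
  have hcomm : Commute (Rq N K (s ^ 2) s) (pt1 (Rq N K (s ^ 2)⁻¹ s⁻¹)) := Rq_commute_pt1_Rq ..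
  refine ⟨?_, hcomm.eq⟩
  rw [hcomm.eq, mul_assoc, Rq_mul_Rq_inv_s17 hs, mul_one]

/-- `R(q)·R^{t₁}(q⁻¹)·R(q⁻¹) = R^{t₁}(q⁻¹)`; equivalently `R(q)`
commutes with `R^{t₁}(q⁻¹)`. -/
theorem Rq_fixes_pt1_Rq_inv (N : ℕ) (hN : 1 ≤ N)
    (K : Type*) [Field K] [CharZero K] (s : K) (hs : s ≠ 0) (q : K) (hq : q = s ^ 2) :
    Rq N K q s * pt1 (Rq N K q⁻¹ s⁻¹) * Rq N K q⁻¹ s⁻¹ = pt1 (Rq N K q⁻¹ s⁻¹) ∧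
      Rq N K q s * pt1 (Rq N K q⁻¹ s⁻¹) = pt1 (Rq N K q⁻¹ s⁻¹) * Rq N K q s :=
  Rq_fixes_pt1_Rq_inv_general N K s hs q hq
end
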